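/- For all t₁, t₂ ∈ ℝ and every k ∈ SU(2), letting M = a_{t₁}·k·a_{t₂} (a product of 2×2 complex matrices) one has Re(trace(M·M*)) = 2 cosh t₁ cosh t₂ + 2 (2|k₁₁|² − 1) sinh t₁ sinh t₂, where M* is the conjugate transpose and k₁₁ is the (1,1) entry of k. -/

import Mathlib

open Matrix

noncomputable section

/-- `SU2` is the special unitary group of `2 × 2` complex matrices. -/
abbrev SU2 : Type := ↥(Matrix.specialUnitaryGroup (Fin 2) ℂ)

/-- The diagonal matrix `a_t = diag (e^{t/2}, e^{-t/2})` in `SL(2, ℂ)`. -/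
def aMatC (t : ℝ) : Matrix (Fin 2) (Fin 2) ℂ :=
  !![(Real.exp (t / 2) : ℂ), 0; 0, (Real.exp (-t / 2) : ℂ)]

/-! `Re tr (M Mᴴ)` is the squared Frobenius norm `∑ |M i j|²`. Multiplying by the diagonal
matrices `a_t` scales `|k i j|²` by `e^{±t₁} e^{±t₂}`, and the rows and columns of a `2 × 2`
unitary matrix being unit vectors gives `|k₁₁|² = |k₂₂|²` and `|k₁₂|² = |k₂₁|² = 1 - |k₁₁|²`.
Collecting the four exponentials gives the `cosh`/`sinh` form. -/

namespace Matrix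

variable {𝕜 m n : Type*} [RCLike 𝕜]

theorem re_mul_conjTranspose_self_apply [Fintype n] (A : Matrix m n 𝕜) (i : m) :
    RCLike.re ((A * Aᴴ) i i) = ∑ j, ‖A i j‖ ^ 2 := by
  simp only [mul_apply, conjTranspose_apply, ← starRingEnd_apply, RCLike.mul_conj, map_sum,
    RCLike.re_ofReal_pow]

theorem re_conjTranspose_mul_self_apply [Fintype m] (A : Matrix m n 𝕜) (j : n) :
    RCLike.re ((Aᴴ * A) j j) = ∑ i, ‖A i j‖ ^ 2 := by
  simp only [mul_apply, conjTranspose_apply, ← starRingEnd_apply, RCLike.conj_mul, map_sum,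
    RCLike.re_ofReal_pow]

theorem re_trace_mul_conjTranspose_self [Fintype m] [Fintype n] (A : Matrix m n 𝕜) :
    RCLike.re (A * Aᴴ).trace = ∑ i, ∑ j, ‖A i j‖ ^ 2 := by
  simp only [trace, diag_apply, map_sum, re_mul_conjTranspose_self_apply]

theorem re_trace_diagonal_mul_mul_diagonal [Fintype m] [Fintype n] [DecidableEq m]
    [DecidableEq n] (d : m → 𝕜) (A : Matrix m n 𝕜) (e : n → 𝕜) :
    RCLike.re ((diagonal d * A * diagonal e) * (diagonal d * A * diagonal e)ᴴ).trace =
      ∑ i, ∑ j, ‖d i‖ ^ 2 * ‖e j‖ ^ 2 * ‖A i j‖ ^ 2 := by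
  simp only [re_trace_mul_conjTranspose_self, diagonal_mul, mul_diagonal, norm_mul]
  congr! 2 with i - j -
  ring

section unitary

variable [Fintype n] [DecidableEq n]

theorem sum_norm_sq_row_of_mem_unitaryGroup {U : Matrix n n 𝕜} (hU : U ∈ unitaryGroup n 𝕜)
    (i : n) : ∑ j, ‖U i j‖ ^ 2 = 1 := by
  rw [← re_mul_conjTranspose_self_apply, ← star_eq_conjTranspose,
    Unitary.mul_star_self_of_mem hU, one_apply_eq, RCLike.one_re]

theorem sum_norm_sq_col_of_mem_unitaryGroup {U : Matrix n n 𝕜} (hU : U ∈ unitaryGroup n 𝕜)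
    (j : n) : ∑ i, ‖U i j‖ ^ 2 = 1 := by
  rw [← re_conjTranspose_mul_self_apply, ← star_eq_conjTranspose,
    Unitary.star_mul_self_of_mem hU, one_apply_eq, RCLike.one_re]

end unitary

theorem norm_sq_apply_of_mem_unitaryGroup_fin_two {U : Matrix (Fin 2) (Fin 2) 𝕜}
    (hU : U ∈ unitaryGroup (Fin 2) 𝕜) :
    ‖U 0 1‖ ^ 2 = 1 - ‖U 0 0‖ ^ 2 ∧ ‖U 1 0‖ ^ 2 = 1 - ‖U 0 0‖ ^ 2 ∧
      ‖U 1 1‖ ^ 2 = ‖U 0 0‖ ^ 2 := by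
  have row₀ := sum_norm_sq_row_of_mem_unitaryGroup hU 0
  have row₁ := sum_norm_sq_row_of_mem_unitaryGroup hU 1
  have col₀ := sum_norm_sq_col_of_mem_unitaryGroup hU 0
  simp only [Fin.sum_univ_two] at row₀ row₁ col₀
  refine ⟨?_, ?_, ?_⟩ <;> linarith

end Matrix

theorem aMatC_eq_diagonal (t : ℝ) :
    aMatC t = diagonal ![(Real.exp (t / 2) : ℂ), (Real.exp (-t / 2) : ℂ)] := by
  rw [aMatC, diagonal_fin_two]
  rfl

theorem norm_ofReal_exp_half_sq (t : ℝ) : ‖(Real.exp (t / 2) : ℂ)‖ ^ 2 = Real.exp t := by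
  rw [Complex.norm_real, Real.norm_of_nonneg (Real.exp_pos _).le, ← Real.exp_nat_mul]
  ring_nf

/-- The Cartan radial coordinate of `a_{t₁} k a_{t₂}` for `k ∈ SU(2)`:
`Re (trace (M M*)) = 2 cosh t₁ cosh t₂ + 2 (2 |k₁₁|² - 1) sinh t₁ sinh t₂`. -/
theorem re_trace_mul_conjTranspose_aMatC_su2_aMatC (t₁ t₂ : ℝ) (k : SU2) :
    (((aMatC t₁ * (k : Matrix (Fin 2) (Fin 2) ℂ) * aMatC t₂) *
        (aMatC t₁ * (k : Matrix (Fin 2) (Fin 2) ℂ) * aMatC t₂)ᴴ).trace).re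
      = 2 * Real.cosh t₁ * Real.cosh t₂ +
          2 * (2 * ‖(k : Matrix (Fin 2) (Fin 2) ℂ) 0 0‖ ^ 2 - 1) *
            Real.sinh t₁ * Real.sinh t₂ := by
  obtain ⟨h01, h10, h11⟩ :=
    norm_sq_apply_of_mem_unitaryGroup_fin_two (mem_specialUnitaryGroup_iff.mp k.2).1
  rw [aMatC_eq_diagonal, aMatC_eq_diagonal, ← RCLike.re_to_complex,
    re_trace_diagonal_mul_mul_diagonal]
  simp only [Fin.sum_univ_two, cons_val_zero, cons_val_one, norm_ofReal_exp_half_sq,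
    h01, h10, h11]
  rw [Real.cosh_eq, Real.cosh_eq, Real.sinh_eq, Real.sinh_eq]
  ring
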